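/- arXiv:1809.09682 — 3 statements merged into one kernel-verified Lean document; each statement's English description precedes it below -/
import Mathlib

section
/- For every p-graph G there exists a p-graph G' in state-determined form with the same interaction language, L(G') = L(G); that is, the language of a p-graph is not affected by state-determined expansion. -/
/-!
Formalization of p-graphs (procrustean graphs), following
"Finding plans subject to stipulations on what information they divulge"
(Zhang, Shell, O'Kane).
-/

universe u v w x

/-- A p-graph: an edge-labelled directed bipartite graph with observation
vertices `Vy`, action vertices `Vu`, edge label sets `lbl v w ⊆ E`
(the empty set meaning "no edge"), and initial states `V0`. -/
structure PGraph (V : Type u) (E : Type v) where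
  Vy : Set V
  Vu : Set V
  lbl : V → V → Set E
  V0 : Set V

namespace PGraph

variable {V V₁ V₂ E X : Type*}

/-- Well-formedness of a p-graph: `Vy` and `Vu` partition the vertex set,
the set of initial states is nonempty and consists exclusively of action
states or exclusively of observation states, each edge originating at an
observation vertex leads to an action vertex, and each edge originating at
an action vertex leads to an observation vertex. -/
def WellFormed (G : PGraph V E) : Prop :=
  Disjoint G.Vy G.Vu ∧
  (∀ v, v ∈ G.Vy ∨ v ∈ G.Vu) ∧
  G.V0.Nonempty ∧
  (G.V0 ⊆ G.Vy ∨ G.V0 ⊆ G.Vu) ∧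
  (∀ v w, v ∈ G.Vy → (G.lbl v w).Nonempty → w ∈ G.Vu) ∧
  (∀ v w, v ∈ G.Vu → (G.lbl v w).Nonempty → w ∈ G.Vy)

/-- The observation space `Y(G)`: the labels borne by edges originating at
observation vertices. -/
def Yspace (G : PGraph V E) : Set E := ⋃ v ∈ G.Vy, ⋃ w, G.lbl v w

/-- The action space `U(G)`: the labels borne by edges originating at
action vertices. -/
def Uspace (G : PGraph V E) : Set E := ⋃ v ∈ G.Vu, ⋃ w, G.lbl v w

/-- A sequence of events `s` transitions in `G` from `v` to `w`. -/
def TransitionsTo (G : PGraph V E) : V → List E → V → Prop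
  | v, [], w => v = w
  | v, e :: s, w => ∃ u, e ∈ G.lbl v u ∧ G.TransitionsTo u s w

/-- The interaction language `L(G)`: all executions on `G`, i.e. finite
event sequences transitioning from some initial state to some vertex. -/
def Lang (G : PGraph V E) : Set (List E) :=
  { s | ∃ v ∈ G.V0, ∃ w, G.TransitionsTo v s w }

/-- `V(G, s)`: the set of vertices reached by execution `s` in `G`. -/
def reached (G : PGraph V E) (s : List E) : Set V :=
  { w | ∃ v ∈ G.V0, G.TransitionsTo v s w }

/-- `S_G(v)`: the set of executions reaching vertex `v` in `G`. -/
def reaching (G : PGraph V E) (v : V) : Set (List E) :=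
  { s | s ∈ G.Lang ∧ v ∈ G.reached s }

/-- `S_G^=(B)`: the set of executions reaching exactly the vertex set `B`. -/
def reachExactly (G : PGraph V E) (B : Set V) : Set (List E) :=
  (⋂ v ∈ B, G.reaching v) \ ⋃ v ∈ Bᶜ, G.reaching v

/-- `h⟨G⟩`: the image p-graph, obtained by applying the label map `h` to
every edge label set of `G`. -/
def map (G : PGraph V E) (h : E → X) : PGraph V X where
  Vy := G.Vy
  Vu := G.Vu
  lbl v w := h '' G.lbl v w
  V0 := G.V0

/-- `h⁻¹⟨I⟩`: the preimage p-graph, obtained by replacing every edge label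
set of `I` by its preimage under the label map `h`. -/
def comap (I : PGraph V X) (h : E → X) : PGraph V E where
  Vy := I.Vy
  Vu := I.Vu
  lbl v w := h ⁻¹' I.lbl v w
  V0 := I.V0

/-- `G` is in state-determined form: every execution reaches exactly one
vertex, `|V(G,s)| = 1`. -/
def StateDetermined (G : PGraph V E) : Prop :=
  ∀ s ∈ G.Lang, ∃ w, G.reached s = {w}

/-- The tensor product `G₁ ⊗ G₂`: observation vertices `Vy(G₁) × Vy(G₂)`,
action vertices `Vu(G₁) × Vu(G₂)`, initial states `V0(G₁) × V0(G₂)`, and an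
edge from `(v₁,v₂)` to `(w₁,w₂)` bearing the label set `E₁ ∩ E₂` where `E₁`
and `E₂` are the label sets in `G₁` and `G₂` respectively. -/
def prod (G₁ : PGraph V₁ E) (G₂ : PGraph V₂ E) : PGraph (V₁ × V₂) E where
  Vy := G₁.Vy ×ˢ G₂.Vy
  Vu := G₁.Vu ×ˢ G₂.Vu
  lbl p q := G₁.lbl p.1 q.1 ∩ G₂.lbl p.2 q.2
  V0 := G₁.V0 ×ˢ G₂.V0

/-- A plan `(P, Vterm)` solves the planning problem `(W, Vgoal)`: there is an
integer bounding the length of all joint-executions, and for every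
joint-execution and every pair of vertices reached simultaneously by it, the
safety (1,2), correctness (3) and liveness (4) conditions hold. -/
def Solves {VP VW : Type*} (P : PGraph VP E) (Vterm : Set VP)
    (W : PGraph VW E) (Vgoal : Set VW) : Prop :=
  (∃ c : ℕ, ∀ s ∈ P.Lang ∩ W.Lang, s.length ≤ c) ∧
  ∀ s ∈ P.Lang ∩ W.Lang, ∀ v ∈ P.reached s, ∀ w ∈ W.reached s,
    (v ∈ P.Vu → w ∈ W.Vu → ∀ v', ∀ e ∈ P.lbl v v', ∃ w', e ∈ W.lbl w w') ∧
    (v ∈ P.Vy → w ∈ W.Vy → ∀ w', ∀ e ∈ W.lbl w w', ∃ v', e ∈ P.lbl v v') ∧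
    (v ∈ Vterm → w ∈ Vgoal) ∧
    (v ∉ Vterm →
      ∃ t v' w', P.TransitionsTo v t v' ∧ W.TransitionsTo w t w' ∧ v' ∈ Vterm)

/-- A plan is `c`-bounded if every execution has length at most `c`. -/
def CBounded {VP : Type*} (P : PGraph VP E) (c : ℕ) : Prop :=
  ∀ s ∈ P.Lang, s.length ≤ c

/-- A plan `P` is congruent on the world graph `W`: executions reaching the
same vertex set in `P` reach the same vertex set in `W`. -/
def Congruent {VP VW : Type*} (P : PGraph VP E) (W : PGraph VW E) : Prop :=
  ∀ s₁ ∈ P.Lang, ∀ s₂ ∈ P.Lang,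
    P.reached s₁ = P.reached s₂ → W.reached s₁ = W.reached s₂

/-- `I` is an I-state graph for world `W` under label map `h`:
a p-graph over the image space with `L(I) ⊇ h[L(W)]`. -/
def IsIStateGraph {VW VI : Type*} (W : PGraph VW E) (h : E → X)
    (I : PGraph VI X) : Prop :=
  (List.map h) '' W.Lang ⊆ I.Lang

/-- `V̂_{I,D}(B)`: the set of estimated world states for I-states `B`,
`{ w ∈ V(W) | S^=_{h⁻¹⟨I⟩}(B) ∩ L(D) ∩ S_W(w) ≠ ∅ }`. -/
def estWorld {VW VI VD : Type*} (W : PGraph VW E) (I : PGraph VI X)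
    (D : PGraph VD E) (h : E → X) (B : Set VI) : Set VW :=
  { w | ((I.comap h).reachExactly B ∩ D.Lang ∩ W.reaching w).Nonempty }

/-- A plan `(P, Vterm)` satisfies the information stipulation `Φ` with
respect to `(W, I, D, h)`: for every joint-execution `s` of the plan and the
world, `Φ` holds of the estimated world states `V̂_{I,D}(V(I, h(s)))`. -/
def SatisfiesStip {VP VW VI VD : Type*} (P : PGraph VP E) (W : PGraph VW E)
    (I : PGraph VI X) (D : PGraph VD E) (h : E → X)
    (Φ : Set VW → Prop) : Prop :=
  ∀ s ∈ P.Lang ∩ W.Lang, Φ (estWorld W I D h (I.reached (List.map h s)))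

end PGraph

namespace PGraph

section Det

variable {V : Type u} {E : Type v}

/-- One-step successor set. -/
def detSucc (G : PGraph V E) (A : Set V) (e : E) : Set V :=
  {w | ∃ v ∈ A, e ∈ G.lbl v w}

/-- Iterated successor set. -/
def detReach (G : PGraph V E) : Set V → List E → Set V
  | A, [] => A
  | A, e :: s => G.detReach (G.detSucc A e) s

/-- The powerset (determinized) p-graph. -/
def det (G : PGraph V E) : PGraph (Set V) E where
  Vy := {A | ¬ A ⊆ G.Vu}
  Vu := {A | A ⊆ G.Vu}
  lbl A B := {e | G.detSucc A e = B ∧ B.Nonempty ∧ (A ⊆ G.Vy ∨ A ⊆ G.Vu)}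
  V0 := {G.V0}

variable (G : PGraph V E)

lemma detSucc_empty (e : E) : G.detSucc ∅ e = ∅ := by
  ext w; simp [detSucc]

lemma detReach_empty (s : List E) : G.detReach ∅ s = ∅ := by
  induction s with
  | nil => rfl
  | cons e s ih => simp [detReach, detSucc_empty, ih]

lemma mem_detReach (s : List E) : ∀ (A : Set V) (w : V),
    w ∈ G.detReach A s ↔ ∃ v ∈ A, G.TransitionsTo v s w := by
  induction s with
  | nil => intro A w; simp [detReach, TransitionsTo, eq_comm]
  | cons e s ih =>
    intro A w
    simp only [detReach, ih, TransitionsTo, detSucc, Set.mem_setOf_eq]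
    constructor
    · rintro ⟨u, ⟨v, hv, he⟩, ht⟩; exact ⟨v, hv, u, he, ht⟩
    · rintro ⟨v, hv, u, he, ht⟩; exact ⟨u, ⟨v, hv, he⟩, ht⟩

lemma det_trans (hyu : ∀ v w, v ∈ G.Vy → (G.lbl v w).Nonempty → w ∈ G.Vu)
    (huy : ∀ v w, v ∈ G.Vu → (G.lbl v w).Nonempty → w ∈ G.Vy)
    (s : List E) : ∀ (A B : Set V), (A ⊆ G.Vy ∨ A ⊆ G.Vu) → A.Nonempty →
    (G.det.TransitionsTo A s B ↔
      B = G.detReach A s ∧ (G.detReach A s).Nonempty) := by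
  induction s with
  | nil =>
    intro A B _ hA
    simp only [TransitionsTo, detReach]
    constructor
    · rintro rfl; exact ⟨rfl, hA⟩
    · rintro ⟨rfl, _⟩; rfl
  | cons e s ih =>
    intro A B hhom hA
    have hhom' : G.detSucc A e ⊆ G.Vy ∨ G.detSucc A e ⊆ G.Vu := by
      rcases hhom with h | h
      · right; rintro w ⟨v, hv, he⟩; exact hyu v w (h hv) ⟨e, he⟩
      · left; rintro w ⟨v, hv, he⟩; exact huy v w (h hv) ⟨e, he⟩
    simp only [TransitionsTo, detReach]
    constructor
    · rintro ⟨U, ⟨rfl, hUne, _⟩, ht⟩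
      exact (ih _ B hhom' hUne).mp ht
    · rintro ⟨rfl, hne⟩
      have hUne : (G.detSucc A e).Nonempty := by
        by_contra h
        rw [Set.not_nonempty_iff_eq_empty] at h
        rw [h, detReach_empty] at hne
        exact hne.ne_empty rfl
      exact ⟨G.detSucc A e, ⟨rfl, hUne, hhom⟩,
        (ih _ _ hhom' hUne).mpr ⟨rfl, hne⟩⟩

end Det

end PGraph

/-- For every p-graph `G` there exists a p-graph `G'` in
state-determined form with the same interaction language, `L(G') = L(G)`. -/
theorem exists_stateDetermined {V : Type u} {E : Type v}
    (G : PGraph V E) (hG : G.WellFormed) :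
    ∃ (V' : Type u) (G' : PGraph V' E),
      G'.WellFormed ∧ G'.StateDetermined ∧ G'.Lang = G.Lang := by
  obtain ⟨hdisj, _hcover, hV0ne, hV0hom, hyu, huy⟩ := hG
  have hV0hom' : G.V0 ⊆ G.Vy ∨ G.V0 ⊆ G.Vu := hV0hom
  refine ⟨Set V, G.det, ?_, ?_, ?_⟩
  · -- well-formed
    refine ⟨?_, ?_, ?_, ?_, ?_, ?_⟩
    · rw [Set.disjoint_left]; intro A hA hA'; exact hA hA'
    · intro A; by_cases h : A ⊆ G.Vu
      · exact Or.inr h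
      · exact Or.inl h
    · exact ⟨G.V0, rfl⟩
    · rcases hV0hom' with h | h
      · left; rintro A rfl
        intro hsub
        obtain ⟨v, hv⟩ := hV0ne
        exact (Set.disjoint_left.mp hdisj (h hv)) (hsub hv)
      · right; rintro A rfl; exact h
    · rintro A B hA ⟨e, rfl, hBne, hhom⟩
      rcases hhom with h | h
      · rintro w ⟨v, hv, he⟩; exact hyu v w (h hv) ⟨e, he⟩
      · exact absurd h hA
    · rintro A B hA ⟨e, rfl, hBne, _⟩
      have h : G.detSucc A e ⊆ G.Vy := by
        rintro w ⟨v, hv, he⟩; exact huy v w (hA hv) ⟨e, he⟩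
      obtain ⟨w, hw⟩ := hBne
      intro hsub
      exact (Set.disjoint_left.mp hdisj (h hw)) (hsub hw)
  · -- state-determined
    rintro s ⟨A, hA, B, hB⟩
    have hA' : A = G.V0 := hA
    subst hA'
    refine ⟨G.detReach G.V0 s, ?_⟩
    obtain ⟨h1, h2⟩ := (G.det_trans hyu huy s G.V0 B hV0hom' hV0ne).mp hB
    ext C
    constructor
    · rintro ⟨A', hA', hC⟩
      have : A' = G.V0 := hA'
      subst this
      exact ((G.det_trans hyu huy s G.V0 C hV0hom' hV0ne).mp hC).1
    · rintro rfl
      exact ⟨G.V0, rfl,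
        (G.det_trans hyu huy s G.V0 _ hV0hom' hV0ne).mpr ⟨rfl, h2⟩⟩
  · -- same language
    ext s
    constructor
    · rintro ⟨A, hA, B, hB⟩
      have hA' : A = G.V0 := hA
      subst hA'
      obtain ⟨_, w, hw⟩ := (G.det_trans hyu huy s G.V0 B hV0hom' hV0ne).mp hB
      obtain ⟨v, hv, ht⟩ := (G.mem_detReach s G.V0 w).mp hw
      exact ⟨v, hv, w, ht⟩
    · rintro ⟨v, hv, w, hw⟩
      refine ⟨G.V0, rfl, G.detReach G.V0 s,
        (G.det_trans hyu huy s G.V0 _ hV0hom' hV0ne).mpr ⟨rfl, w, ?_⟩⟩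
      exact (G.mem_detReach s G.V0 w).mpr ⟨v, hv, hw⟩
end

section
/- (Congruent plan) Let W be a world p-graph and (P, V_term) a plan whose interaction language L(P) is finite. Then there exists a plan (P', V'_term) that is congruent on W and satisfies L(P') = L(P); moreover P' can be taken in tree form, so that distinct executions of P' reach distinct vertex sets (for all s₁, s₂ ∈ L(P'), V(P',s₁) = V(P',s₂) implies s₁ = s₂). -/
/-!
Formalization of p-graphs (procrustean graphs), following
"Finding plans subject to stipulations on what information they divulge"
(Zhang, Shell, O'Kane).
-/

universe u v w x

namespace PGraph

variable {V V₁ V₂ E X : Type*}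

/-- Interaction languages are prefix-closed (at the level of transitions). -/
theorem transitionsTo_append_ex {V E : Type*} (G : PGraph V E) :
    ∀ (s t : List E) (v w : V), G.TransitionsTo v (s ++ t) w →
      ∃ u, G.TransitionsTo v s u := by
  intro s
  induction s with
  | nil => intro t v w _; exact ⟨v, rfl⟩
  | cons e s ih =>
    rintro t v w ⟨u, he, htr⟩
    obtain ⟨u', hu'⟩ := ih t u w htr
    exact ⟨u', u, he, hu'⟩

theorem lang_prefix {V E : Type*} (G : PGraph V E) {s t : List E}
    (h : s ++ t ∈ G.Lang) : s ∈ G.Lang := by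
  obtain ⟨v, hv, w, htr⟩ := h
  obtain ⟨u, hu⟩ := transitionsTo_append_ex G s t v w htr
  exact ⟨v, hv, u, hu⟩

/-- The tree unrolling of a plan `P`: vertices are event sequences. -/
def treeGraph {VP E : Type*} (P : PGraph VP E) : PGraph (List E) E where
  Vy := { l | Even l.length }
  Vu := { l | ¬ Even l.length }
  lbl v w := { e | w = v ++ [e] ∧ v ++ [e] ∈ P.Lang }
  V0 := {[]}

theorem treeGraph_transitionsTo_eq {VP E : Type*} (P : PGraph VP E) :
    ∀ (s : List E) (v w : List E), (treeGraph P).TransitionsTo v s w →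
      w = v ++ s := by
  intro s
  induction s with
  | nil => intro v w h; simpa using h.symm
  | cons e s ih =>
    rintro v w ⟨u, ⟨hue, _⟩, htr⟩
    rw [ih u w htr, hue]; simp

theorem treeGraph_transitionsTo_of_lang {VP E : Type*} (P : PGraph VP E) :
    ∀ (s v : List E), v ++ s ∈ P.Lang →
      (treeGraph P).TransitionsTo v s (v ++ s) := by
  intro s
  induction s with
  | nil => intro v _; simp [PGraph.TransitionsTo]
  | cons e s ih =>
    intro v h
    refine ⟨v ++ [e], ⟨rfl, ?_⟩, ?_⟩
    · have : (v ++ [e]) ++ s ∈ P.Lang := by simpa using h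
      exact lang_prefix P this
    · have := ih (v ++ [e]) (by simpa using h)
      simpa using this

theorem treeGraph_lang_of_transitionsTo {VP E : Type*} (P : PGraph VP E) :
    ∀ (s v w : List E), v ∈ P.Lang →
      (treeGraph P).TransitionsTo v s w → w ∈ P.Lang := by
  intro s
  induction s with
  | nil => intro v w hv h; rwa [show w = v from h.symm]
  | cons e s ih =>
    rintro v w hv ⟨u, ⟨hue, hul⟩, htr⟩
    exact ih u w (hue ▸ hul) htr

end PGraph

/-- Congruent plan: Let `W` be a world p-graph and `(P, Vterm)`
a plan whose interaction language is finite. Then there exists a plan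
`(P', Vterm')` that is congruent on `W` with `L(P') = L(P)`; moreover `P'`
can be taken in tree form, so that distinct executions of `P'` reach distinct
vertex sets. -/
theorem exists_congruent_tree {VP : Type u} {VW : Type w} {E : Type v}
    (W : PGraph VW E) (hW : W.WellFormed)
    (P : PGraph VP E) (Vterm : Set VP) (hP : P.WellFormed)
    (hfin : P.Lang.Finite) :
    ∃ (VP' : Type v) (P' : PGraph VP' E) (Vterm' : Set VP'),
      P'.WellFormed ∧ P'.Congruent W ∧ P'.Lang = P.Lang ∧
      ∀ s₁ ∈ P'.Lang, ∀ s₂ ∈ P'.Lang,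
        P'.reached s₁ = P'.reached s₂ → s₁ = s₂ := by
  classical
  refine ⟨List E, PGraph.treeGraph P, ∅, ?_, ?_, ?_, ?_⟩
  · -- WellFormed
    refine ⟨?_, fun v => em _, ⟨[], rfl⟩, Or.inl ?_, ?_, ?_⟩
    · rw [Set.disjoint_left]; exact fun l h h' => h' h
    · intro l hl
      cases Set.eq_of_mem_singleton hl
      exact ⟨0, rfl⟩
    · rintro v w hv ⟨e, he, _⟩
      subst he
      simp only [PGraph.treeGraph, Set.mem_setOf_eq] at hv ⊢
      simp [Nat.even_add_one, hv]
    · rintro v w hv ⟨e, he, _⟩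
      subst he
      simp only [PGraph.treeGraph, Set.mem_setOf_eq] at hv ⊢
      simp [Nat.even_add_one, hv]
  · -- Congruent
    have hnil : [] ∈ P.Lang := by
      obtain ⟨v, hv⟩ := hP.2.2.1
      exact ⟨v, hv, v, rfl⟩
    have key : ∀ s ∈ (PGraph.treeGraph P).Lang,
        (PGraph.treeGraph P).reached s = {s} := by
      rintro s ⟨v, hv, w, htr⟩
      simp only [PGraph.treeGraph, Set.mem_singleton_iff] at hv
      subst hv
      ext u
      simp only [PGraph.reached, Set.mem_setOf_eq, Set.mem_singleton_iff]
      constructor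
      · rintro ⟨v', hv', htr'⟩
        simp only [PGraph.treeGraph, Set.mem_singleton_iff] at hv'
        subst hv'
        simpa using PGraph.treeGraph_transitionsTo_eq P s [] u htr'
      · intro hu
        have hw : w = s := by
          simpa using PGraph.treeGraph_transitionsTo_eq P s [] w htr
        subst hw; subst hu
        exact ⟨[], rfl, htr⟩
    intro s₁ hs₁ s₂ hs₂ h
    rw [key s₁ hs₁, key s₂ hs₂] at h
    rw [Set.singleton_eq_singleton_iff.mp h]
  · -- Lang = Lang
    have hnil : [] ∈ P.Lang := by
      obtain ⟨v, hv⟩ := hP.2.2.1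
      exact ⟨v, hv, v, rfl⟩
    ext s
    constructor
    · rintro ⟨v, hv, w, htr⟩
      simp only [PGraph.treeGraph, Set.mem_singleton_iff] at hv
      subst hv
      have hws : w = s := by
        simpa using PGraph.treeGraph_transitionsTo_eq P s [] w htr
      exact hws ▸ PGraph.treeGraph_lang_of_transitionsTo P s [] w hnil htr
    · intro hs
      exact ⟨[], rfl, s, by simpa using PGraph.treeGraph_transitionsTo_of_lang P s [] (by simpa using hs)⟩
  · -- tree form: reached determines execution
    have key : ∀ s ∈ (PGraph.treeGraph P).Lang,
        (PGraph.treeGraph P).reached s = {s} := by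
      rintro s ⟨v, hv, w, htr⟩
      simp only [PGraph.treeGraph, Set.mem_singleton_iff] at hv
      subst hv
      ext u
      simp only [PGraph.reached, Set.mem_setOf_eq, Set.mem_singleton_iff]
      constructor
      · rintro ⟨v', hv', htr'⟩
        simp only [PGraph.treeGraph, Set.mem_singleton_iff] at hv'
        subst hv'
        simpa using PGraph.treeGraph_transitionsTo_eq P s [] u htr'
      · intro hu
        have hw : w = s := by
          simpa using PGraph.treeGraph_transitionsTo_eq P s [] w htr
        subst hw; subst hu
        exact ⟨[], rfl, htr⟩
    intro s₁ hs₁ s₂ hs₂ h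
    rw [key s₁ hs₁, key s₂ hs₂] at h
    exact Set.singleton_eq_singleton_iff.mp h
end

section
/- If a plan (P, V_term) with finite interaction language solves the planning problem (W, V_goal), then there exists a plan (P', V'_term) that is congruent on W, has L(P') = L(P), and also solves (W, V_goal). -/
/-!
Formalization of p-graphs (procrustean graphs), following
"Finding plans subject to stipulations on what information they divulge"
(Zhang, Shell, O'Kane).
-/

universe u v w x

section Aux

variable {V E : Type*}

open PGraph

lemma trans_append (G : PGraph V E) :
    ∀ (s t : List E) (a b : V),
      G.TransitionsTo a (s ++ t) b ↔ ∃ m, G.TransitionsTo a s m ∧ G.TransitionsTo m t b := by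
  intro s
  induction s with
  | nil =>
      intro t a b
      simp [PGraph.TransitionsTo]
  | cons e s ih =>
      intro t a b
      simp only [List.cons_append, PGraph.TransitionsTo]
      constructor
      · rintro ⟨u, he, htr⟩
        obtain ⟨m, h1, h2⟩ := (ih t u b).1 htr
        exact ⟨m, ⟨u, he, h1⟩, h2⟩
      · rintro ⟨m, ⟨u, he, h1⟩, h2⟩
        exact ⟨u, he, (ih t u b).2 ⟨m, h1, h2⟩⟩

lemma lang_prefix_closed (G : PGraph V E) {s t : List E} (h : s ++ t ∈ G.Lang) :
    s ∈ G.Lang := by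
  obtain ⟨v, hv, w, htr⟩ := h
  obtain ⟨m, h1, _⟩ := (trans_append G s t v w).1 htr
  exact ⟨v, hv, m, h1⟩

lemma nil_mem_lang (G : PGraph V E) (h : G.V0.Nonempty) : ([] : List E) ∈ G.Lang := by
  obtain ⟨v, hv⟩ := h
  exact ⟨v, hv, v, rfl⟩

/-- Parity lemma: in a well-formed p-graph the side of the reached vertex is
determined by the side of the start vertex and the parity of the length. -/
lemma parity_lemma (G : PGraph V E) (hG : G.WellFormed) :
    ∀ (s : List E) (a b : V), G.TransitionsTo a s b →
      (b ∈ G.Vu ↔ (Even s.length ↔ a ∈ G.Vu)) := by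
  obtain ⟨hdisj, htot, _, _, hyu, huy⟩ := hG
  intro s
  induction s with
  | nil =>
      intro a b h
      cases h
      simp
  | cons e s ih =>
      intro a b h
      obtain ⟨u, he, htr⟩ := h
      have hu := ih u b htr
      rcases htot a with ha | ha
      · have hau : a ∉ G.Vu := fun h' => (Set.disjoint_left.1 hdisj ha) h'
        have huu : u ∈ G.Vu := hyu a u ha ⟨e, he⟩
        simp only [hu, huu, List.length_cons, Nat.even_add_one]
        tauto
      · have huy' : u ∈ G.Vy := huy a u ha ⟨e, he⟩
        have huu : u ∉ G.Vu := fun h' => (Set.disjoint_left.1 hdisj huy') h'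
        simp only [hu, huu, List.length_cons, Nat.even_add_one]
        tauto

/-- The unrolled (tree) version of a plan: vertices are event sequences. -/
def unroll (P : PGraph V E) : PGraph (List E) E where
  Vy := {s | ¬(Even s.length ↔ P.V0 ⊆ P.Vu)}
  Vu := {s | Even s.length ↔ P.V0 ⊆ P.Vu}
  lbl s t := {e | t = s ++ [e] ∧ t ∈ P.Lang}
  V0 := {[]}

lemma unroll_trans_eq (P : PGraph V E) :
    ∀ (t : List E) (a b : List E), (unroll P).TransitionsTo a t b → b = a ++ t := by
  intro t
  induction t with
  | nil => intro a b h; cases h; simp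
  | cons e s ih =>
      intro a b h
      obtain ⟨u, ⟨hu, _⟩, htr⟩ := h
      have := ih u b htr
      subst hu this
      simp

lemma unroll_trans_lang (P : PGraph V E) :
    ∀ (t : List E) (a b : List E), t ≠ [] → (unroll P).TransitionsTo a t b → b ∈ P.Lang := by
  intro t
  induction t with
  | nil => intro a b h; exact absurd rfl h
  | cons e s ih =>
      intro a b _ h
      obtain ⟨u, ⟨hu, hlang⟩, htr⟩ := h
      rcases s with _ | ⟨e', s'⟩
      · cases htr; exact hlang
      · exact ih u b (by simp) htr

lemma unroll_trans_of_lang (P : PGraph V E) :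
    ∀ (s a : List E), a ++ s ∈ P.Lang → (unroll P).TransitionsTo a s (a ++ s) := by
  intro s
  induction s with
  | nil => intro a _; simpa [PGraph.TransitionsTo] using rfl
  | cons e s ih =>
      intro a h
      have h' : (a ++ [e]) ++ s ∈ P.Lang := by simpa using h
      have hpre : a ++ [e] ∈ P.Lang := lang_prefix_closed P h'
      refine ⟨a ++ [e], ⟨rfl, hpre⟩, ?_⟩
      have := ih (a ++ [e]) h'
      simpa using this

lemma unroll_lang (P : PGraph V E) (h0 : P.V0.Nonempty) :
    (unroll P).Lang = P.Lang := by
  ext s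
  constructor
  · rintro ⟨a, ha, w, htr⟩
    have ha' : a = [] := ha
    subst ha'
    rcases eq_or_ne s [] with rfl | hne
    · exact nil_mem_lang P h0
    · have hw : w = s := by simpa using unroll_trans_eq P s [] w htr
      exact hw ▸ unroll_trans_lang P s [] w hne htr
  · intro hs
    refine ⟨[], rfl, s, ?_⟩
    simpa using unroll_trans_of_lang P s [] (by simpa using hs)

lemma unroll_reached_sub (P : PGraph V E) (s : List E) :
    (unroll P).reached s ⊆ {s} := by
  rintro b ⟨a, ha, htr⟩
  have ha' : a = [] := ha
  subst ha'
  have := unroll_trans_eq P s [] b htr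
  simpa using this

lemma unroll_mem_reached (P : PGraph V E) {v : List E} (hs : v ∈ P.Lang) :
    v ∈ (unroll P).reached v := by
  refine ⟨[], rfl, ?_⟩
  simpa using unroll_trans_of_lang P v [] (by simpa using hs)

lemma unroll_reached_eq (P : PGraph V E) {v : List E} (hs : v ∈ P.Lang) :
    (unroll P).reached v = {v} :=
  Set.Subset.antisymm (unroll_reached_sub P v) (by simpa using unroll_mem_reached P hs)

end Aux

/-- If a plan `(P, Vterm)` with finite interaction language
solves the planning problem `(W, Vgoal)`, then there exists a plan
`(P', Vterm')` that is congruent on `W`, has `L(P') = L(P)`, and also solves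
`(W, Vgoal)`. -/
theorem exists_congruent_solving {VP : Type u} {VW : Type w} {E : Type v}
    (W : PGraph VW E) (Vgoal : Set VW) (hW : W.WellFormed)
    (P : PGraph VP E) (Vterm : Set VP) (hP : P.WellFormed)
    (hfin : P.Lang.Finite)
    (hsol : PGraph.Solves P Vterm W Vgoal) :
    ∃ (VP' : Type v) (P' : PGraph VP' E) (Vterm' : Set VP'),
      P'.WellFormed ∧ P'.Congruent W ∧ P'.Lang = P.Lang ∧
      PGraph.Solves P' Vterm' W Vgoal := by
  obtain ⟨hdisj, htot, h0, hside, hyu, huy⟩ := hP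
  have hP' : P.WellFormed := ⟨hdisj, htot, h0, hside, hyu, huy⟩
  have hL : (unroll P).Lang = P.Lang := unroll_lang P h0
  have hV0u : ∀ v0 ∈ P.V0, (v0 ∈ P.Vu ↔ P.V0 ⊆ P.Vu) := by
    intro v0 hv0
    constructor
    · intro hvu
      rcases hside with hs | hs
      · exact absurd hvu (Set.disjoint_left.1 hdisj (hs hv0))
      · exact hs
    · intro hs; exact hs hv0
  have hreach_side : ∀ (v : List E), ∀ m ∈ P.reached v,
      (m ∈ P.Vu ↔ (Even v.length ↔ P.V0 ⊆ P.Vu)) := by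
    rintro v m ⟨v0, hv0, htr⟩
    rw [parity_lemma P hP' v v0 m htr, hV0u v0 hv0]
  refine ⟨List E, unroll P, {t | ∃ v ∈ P.reached t, v ∈ Vterm}, ?_, ?_, hL, ?_⟩
  · -- Well-formedness of the unrolled plan
    refine ⟨?_, ?_, ⟨[], rfl⟩, ?_, ?_, ?_⟩
    · rw [Set.disjoint_left]; intro v hs hs'; exact hs hs'
    · intro v; exact (em (Even v.length ↔ P.V0 ⊆ P.Vu)).symm
    · rcases hside with hs | hs
      · left
        intro t ht
        have ht' : t = [] := ht
        subst ht'
        intro hiff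
        have hsub : P.V0 ⊆ P.Vu := hiff.1 (by simp)
        obtain ⟨v0, hv0⟩ := h0
        exact Set.disjoint_left.1 hdisj (hs hv0) (hsub hv0)
      · right
        intro t ht
        have ht' : t = [] := ht
        subst ht'
        exact iff_of_true (by simp) hs
    · rintro v t hs ⟨e, rfl, -⟩
      show Even (v ++ [e]).length ↔ P.V0 ⊆ P.Vu
      have hs' : ¬(Even v.length ↔ P.V0 ⊆ P.Vu) := hs
      simp only [List.length_append, List.length_cons, List.length_nil,
        Nat.even_add_one]
      tauto
    · rintro v t hs ⟨e, rfl, -⟩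
      show ¬(Even (v ++ [e]).length ↔ P.V0 ⊆ P.Vu)
      have hs' : Even v.length ↔ P.V0 ⊆ P.Vu := hs
      simp only [List.length_append, List.length_cons, List.length_nil,
        Nat.even_add_one]
      tauto
  · -- Congruence on W
    intro s₁ hs₁ s₂ hs₂ hre
    have h1 : s₁ ∈ (unroll P).reached s₁ := unroll_mem_reached P (hL ▸ hs₁)
    rw [hre] at h1
    have : s₁ = s₂ := unroll_reached_sub P s₂ h1
    rw [this]
  · -- Solves
    obtain ⟨⟨c, hc⟩, hcond⟩ := hsol
    constructor
    · exact ⟨c, fun v hs => hc v ⟨hL ▸ hs.1, hs.2⟩⟩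
    · intro s hs v hv w hw
      have hsP : s ∈ P.Lang := hL ▸ hs.1
      have hsW : s ∈ W.Lang := hs.2
      have hv' : v = s := unroll_reached_sub P s hv
      subst hv'
      refine ⟨?_, ?_, ?_, ?_⟩
      · -- safety (1)
        rintro hsVu hwVu v' e ⟨rfl, hlang⟩
        obtain ⟨v0, hv0, wend, htr⟩ := hlang
        obtain ⟨m, h1, h2⟩ := (trans_append P v [e] v0 wend).1 htr
        obtain ⟨u, heu, -⟩ := h2
        have hmr : m ∈ P.reached v := ⟨v0, hv0, h1⟩
        have hmVu : m ∈ P.Vu := (hreach_side v m hmr).2 hsVu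
        exact (hcond v ⟨hsP, hsW⟩ m hmr w hw).1 hmVu hwVu u e heu
      · -- safety (2)
        intro hsVy hwVy w' e he
        obtain ⟨v0, hv0, m, htr⟩ := hsP
        have hmr : m ∈ P.reached v := ⟨v0, hv0, htr⟩
        have hmVu : m ∉ P.Vu := fun h => hsVy ((hreach_side v m hmr).1 h)
        have hmVy : m ∈ P.Vy := (htot m).resolve_right hmVu
        obtain ⟨u, heu⟩ :=
          (hcond v ⟨⟨v0, hv0, m, htr⟩, hsW⟩ m hmr w hw).2.1 hmVy hwVy w' e he
        refine ⟨v ++ [e], rfl, ?_⟩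
        exact ⟨v0, hv0, u, (trans_append P v [e] v0 u).2 ⟨m, htr, u, heu, rfl⟩⟩
      · -- correctness (3)
        rintro ⟨m, hmr, hmt⟩
        exact (hcond v ⟨hsP, hsW⟩ m hmr w hw).2.2.1 hmt
      · -- liveness (4)
        intro hnterm
        obtain ⟨v0, hv0, m, htr⟩ := hsP
        have hmr : m ∈ P.reached v := ⟨v0, hv0, htr⟩
        have hm : m ∉ Vterm := fun h => hnterm ⟨m, hmr, h⟩
        obtain ⟨t, v', w', hPt, hWt, hv't⟩ :=
          (hcond v ⟨⟨v0, hv0, m, htr⟩, hsW⟩ m hmr w hw).2.2.2 hm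
        have hst : v ++ t ∈ P.Lang :=
          ⟨v0, hv0, v', (trans_append P v t v0 v').2 ⟨m, htr, hPt⟩⟩
        refine ⟨t, v ++ t, w', unroll_trans_of_lang P t v hst, hWt, ?_⟩
        exact ⟨v', ⟨v0, hv0, (trans_append P v t v0 v').2 ⟨m, htr, hPt⟩⟩, hv't⟩
end
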